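/- In a finite-horizon MDP, if a deterministic policy π̂ satisfies max_a Q^π̂_{h}(s,a) − Q^π̂_{h}(s, π̂_{h}(s)) ≤ ε_h(s) for all s and h, then for every step h and every policy π', ∑_s w^{π'}_h(s)(V*_h(s) − V^π̂_h(s)) ≤ ∑_{h'=h}^H sup_π ∑_s w^π_{h'}(s) ε_{h'}(s). -/

import Mathlib

open Finset in
/-- A finite-horizon MDP with finite state and action spaces, horizon `H`
(steps indexed `0, …, H-1`), initial state distribution `P0`, transition kernels `P`,
and mean rewards `r` in `[0,1]`. -/
structure MDP (S A : Type*) [Fintype S] [Fintype A] where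
  H : ℕ
  P0 : S → ℝ
  P0_nonneg : ∀ s, 0 ≤ P0 s
  P0_sum : ∑ s, P0 s = 1
  P : ℕ → S → A → S → ℝ
  P_nonneg : ∀ h s a s', 0 ≤ P h s a s'
  P_sum : ∀ h s a, ∑ s', P h s a s' = 1
  r : ℕ → S → A → ℝ
  r_nonneg : ∀ h s a, 0 ≤ r h s a
  r_le_one : ∀ h s a, r h s a ≤ 1

/-- A (stochastic) policy: `π h s a` is the probability of playing `a` in state `s` at step `h`. -/
def Policy (S A : Type*) : Type _ := ℕ → S → A → ℝ

/-- `π` is a genuine stochastic policy: nonnegative and summing to one over actions. -/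
def IsPolicy {S A : Type*} [Fintype A] (π : Policy S A) : Prop :=
  (∀ h s a, 0 ≤ π h s a) ∧ ∀ h s, ∑ a, π h s a = 1

/-- The stochastic policy corresponding to a deterministic policy `d`. -/
noncomputable def detPolicy {S A : Type*} [DecidableEq A] (d : ℕ → S → A) : Policy S A :=
  fun h s a => if a = d h s then 1 else 0

variable {S A : Type*} [Fintype S] [Fintype A]

/-- Value function computed backwards: `Vaux M π k s` is the expected reward-to-go of
policy `π` from state `s` when `k` steps remain (i.e. at step `H - k`). -/
noncomputable def Vaux (M : MDP S A) (π : Policy S A) : ℕ → S → ℝ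
  | 0, _ => 0
  | (k+1), s =>
      ∑ a, π (M.H - (k+1)) s a *
        (M.r (M.H - (k+1)) s a + ∑ s', M.P (M.H - (k+1)) s a s' * Vaux M π k s')

/-- `Vfun M π h s = V^π_h(s)`, the value of policy `π` at state `s`, step `h`. -/
noncomputable def Vfun (M : MDP S A) (π : Policy S A) (h : ℕ) (s : S) : ℝ :=
  Vaux M π (M.H - h) s

/-- `Qfun M π h s a = Q^π_h(s,a)` via the Bellman equation. -/
noncomputable def Qfun (M : MDP S A) (π : Policy S A) (h : ℕ) (s : S) (a : A) : ℝ :=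
  M.r h s a + ∑ s', M.P h s a s' * Vfun M π (h+1) s'

/-- `visit M π h s = w^π_h(s) = Pr_π[s_h = s]`, the state visitation probability. -/
noncomputable def visit (M : MDP S A) (π : Policy S A) : ℕ → S → ℝ
  | 0, s => M.P0 s
  | (h+1), s => ∑ s', ∑ a, visit M π h s' * π h s' a * M.P h s' a s

/-- `visitSA M π h s a = w^π_h(s,a) = Pr_π[s_h = s, a_h = a]`. -/
noncomputable def visitSA (M : MDP S A) (π : Policy S A) (h : ℕ) (s : S) (a : A) : ℝ :=
  visit M π h s * π h s a

/-- `Vstar M h s = V^*_h(s)`, the optimal value function. -/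
noncomputable def Vstar (M : MDP S A) (h : ℕ) (s : S) : ℝ :=
  ⨆ π : {π : Policy S A // IsPolicy π}, Vfun M π.1 h s

/-- `Qstar M h s a = Q^*_h(s,a)`, the optimal Q-function. -/
noncomputable def Qstar (M : MDP S A) (h : ℕ) (s : S) (a : A) : ℝ :=
  M.r h s a + ∑ s', M.P h s a s' * Vstar M (h+1) s'

/-- `Wmax M h s = W_h(s) = sup_π Pr_π[s_h = s]`, the maximum reachability of `s` at step `h`. -/
noncomputable def Wmax (M : MDP S A) (h : ℕ) (s : S) : ℝ :=
  ⨆ π : {π : Policy S A // IsPolicy π}, visit M π.1 h s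

/-- `V0 M π = V^π_0`, the value of policy `π`. -/
noncomputable def V0 (M : MDP S A) (π : Policy S A) : ℝ :=
  ∑ s, M.P0 s * Vfun M π 0 s

/-- `Vstar0 M = V^*_0 = sup_π V^π_0`. -/
noncomputable def Vstar0 (M : MDP S A) : ℝ :=
  ⨆ π : {π : Policy S A // IsPolicy π}, V0 M π.1


section Aux

variable {S A : Type*} [Fintype S] [Fintype A]

lemma isPolicy_detPolicy [DecidableEq A] (d : ℕ → S → A) :
    IsPolicy (detPolicy (S := S) d) := by
  constructor
  · intro h s a; unfold detPolicy; split <;> norm_num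
  · intro h s; simp [detPolicy]

instance instNonemptyPolicy [Nonempty A] : Nonempty {π : Policy S A // IsPolicy π} := by
  classical
  exact ⟨⟨detPolicy (fun _ _ => Classical.arbitrary A), isPolicy_detPolicy _⟩⟩

lemma Vaux_nonneg (M : MDP S A) {π : Policy S A} (hπ : IsPolicy π) :
    ∀ k s, 0 ≤ Vaux M π k s := by
  intro k
  induction k with
  | zero => intro s; simp [Vaux]
  | succ k ih =>
      intro s
      rw [Vaux]
      refine Finset.sum_nonneg fun a _ => mul_nonneg (hπ.1 _ _ _) (add_nonneg (M.r_nonneg _ _ _) ?_)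
      exact Finset.sum_nonneg fun s' _ => mul_nonneg (M.P_nonneg _ _ _ _) (ih s')

lemma Vaux_le (M : MDP S A) {π : Policy S A} (hπ : IsPolicy π) :
    ∀ k s, Vaux M π k s ≤ k := by
  intro k
  induction k with
  | zero => intro s; simp [Vaux]
  | succ k ih =>
      intro s
      rw [Vaux]
      calc ∑ a, π (M.H - (k+1)) s a *
            (M.r (M.H - (k+1)) s a + ∑ s', M.P (M.H - (k+1)) s a s' * Vaux M π k s')
          ≤ ∑ a, π (M.H - (k+1)) s a * ((k:ℝ)+1) := by
            refine Finset.sum_le_sum fun a _ => mul_le_mul_of_nonneg_left ?_ (hπ.1 _ _ _)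
            have h1 : ∑ s', M.P (M.H - (k+1)) s a s' * Vaux M π k s' ≤ (k:ℝ) := by
              calc ∑ s', M.P (M.H - (k+1)) s a s' * Vaux M π k s'
                  ≤ ∑ s', M.P (M.H - (k+1)) s a s' * (k:ℝ) :=
                    Finset.sum_le_sum fun s' _ =>
                      mul_le_mul_of_nonneg_left (ih s') (M.P_nonneg _ _ _ _)
                _ = (k:ℝ) := by rw [← Finset.sum_mul, M.P_sum, one_mul]
            have h2 := M.r_le_one (M.H - (k+1)) s a
            linarith
        _ = (k:ℝ)+1 := by rw [← Finset.sum_mul, hπ.2, one_mul]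
        _ = ((k+1 : ℕ) : ℝ) := by push_cast; ring

lemma Vfun_nonneg (M : MDP S A) {π : Policy S A} (hπ : IsPolicy π) (h : ℕ) (s : S) :
    0 ≤ Vfun M π h s := Vaux_nonneg M hπ _ s

lemma Vfun_le (M : MDP S A) {π : Policy S A} (hπ : IsPolicy π) (h : ℕ) (s : S) :
    Vfun M π h s ≤ M.H := by
  refine (Vaux_le M hπ _ s).trans ?_
  exact_mod_cast Nat.cast_le.mpr (Nat.sub_le _ _)

lemma bddAbove_Vfun (M : MDP S A) (h : ℕ) (s : S) :
    BddAbove (Set.range fun π : {π : Policy S A // IsPolicy π} => Vfun M π.1 h s) := by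
  refine ⟨M.H, ?_⟩
  rintro _ ⟨π, rfl⟩
  exact Vfun_le M π.2 h s

lemma Vfun_le_Vstar [Nonempty A] (M : MDP S A) {π : Policy S A} (hπ : IsPolicy π)
    (h : ℕ) (s : S) : Vfun M π h s ≤ Vstar M h s :=
  le_ciSup (bddAbove_Vfun M h s) (⟨π, hπ⟩ : {π : Policy S A // IsPolicy π})

lemma Vfun_zero (M : MDP S A) (π : Policy S A) {h : ℕ} (hh : M.H ≤ h) (s : S) :
    Vfun M π h s = 0 := by
  unfold Vfun
  rw [Nat.sub_eq_zero_of_le hh]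
  rfl

lemma Vstar_zero [Nonempty A] (M : MDP S A) {h : ℕ} (hh : M.H ≤ h) (s : S) :
    Vstar M h s = 0 := by
  unfold Vstar
  rw [show (fun π : {π : Policy S A // IsPolicy π} => Vfun M π.1 h s) = fun _ => 0 from
    funext fun π => Vfun_zero M π.1 hh s]
  exact ciSup_const

end Aux
section Aux2

variable {S A : Type*} [Fintype S] [Fintype A]

lemma Vfun_bellman (M : MDP S A) (π : Policy S A) {h : ℕ} (hh : h < M.H) (s : S) :
    Vfun M π h s = ∑ a, π h s a * Qfun M π h s a := by
  have hk : M.H - h = (M.H - (h+1)) + 1 := by omega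
  have h2 : M.H - ((M.H - (h+1)) + 1) = h := by omega
  unfold Vfun Qfun
  rw [hk, Vaux, h2]
  rfl

lemma Vfun_det [DecidableEq A] (M : MDP S A) (d : ℕ → S → A) {h : ℕ} (hh : h < M.H) (s : S) :
    Vfun M (detPolicy d) h s = Qfun M (detPolicy d) h s (d h s) := by
  rw [Vfun_bellman M _ hh s]
  simp [detPolicy, ite_mul]

lemma visit_nonneg (M : MDP S A) {π : Policy S A} (hπ : IsPolicy π) :
    ∀ h s, 0 ≤ visit M π h s := by
  intro h
  induction h with
  | zero => intro s; exact M.P0_nonneg s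
  | succ h ih =>
      intro s
      rw [visit]
      refine Finset.sum_nonneg fun s' _ => Finset.sum_nonneg fun a _ => ?_
      exact mul_nonneg (mul_nonneg (ih s') (hπ.1 _ _ _)) (M.P_nonneg _ _ _ _)

lemma visit_sum (M : MDP S A) {π : Policy S A} (hπ : IsPolicy π) :
    ∀ h, ∑ s, visit M π h s = 1 := by
  intro h
  induction h with
  | zero => exact M.P0_sum
  | succ h ih =>
      simp only [visit]
      rw [Finset.sum_comm]
      calc ∑ s', ∑ s, ∑ a, visit M π h s' * π h s' a * M.P h s' a s
          = ∑ s', ∑ a, ∑ s, visit M π h s' * π h s' a * M.P h s' a s := by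
            congr 1; ext s'; rw [Finset.sum_comm]
        _ = ∑ s', ∑ a, visit M π h s' * π h s' a := by
            congr 1; ext s'; congr 1; ext a
            rw [← Finset.mul_sum, M.P_sum, mul_one]
        _ = ∑ s', visit M π h s' := by
            congr 1; ext s'
            rw [← Finset.mul_sum, hπ.2, mul_one]
        _ = 1 := ih

lemma visit_le_one (M : MDP S A) {π : Policy S A} (hπ : IsPolicy π) (h : ℕ) (s : S) :
    visit M π h s ≤ 1 := by
  rw [← visit_sum M hπ h]
  exact Finset.single_le_sum (fun s' _ => visit_nonneg M hπ h s') (Finset.mem_univ s)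

lemma visit_congr (M : MDP S A) {π π' : Policy S A} :
    ∀ h, (∀ k, k < h → ∀ s a, π k s a = π' k s a) → ∀ s, visit M π h s = visit M π' h s := by
  intro h
  induction h with
  | zero => intro _ s; rfl
  | succ h ih =>
      intro hag s
      rw [visit, visit]
      refine Finset.sum_congr rfl fun s' _ => Finset.sum_congr rfl fun a _ => ?_
      rw [ih (fun k hk => hag k (by omega)) s', hag h (by omega)]

lemma bddAbove_visit_eps (M : MDP S A) (ε : ℕ → S → ℝ) (hε : ∀ h s, 0 ≤ ε h s) (h : ℕ) :
    BddAbove (Set.range fun π : {π : Policy S A // IsPolicy π} =>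
      ∑ s, visit M π.1 h s * ε h s) := by
  refine ⟨∑ s, ε h s, ?_⟩
  rintro _ ⟨π, rfl⟩
  refine Finset.sum_le_sum fun s _ => ?_
  calc visit M π.1 h s * ε h s ≤ 1 * ε h s :=
        mul_le_mul_of_nonneg_right (visit_le_one M π.2 h s) (hε h s)
    _ = ε h s := one_mul _

end Aux2
section Aux3

variable {S A : Type*} [Fintype S] [Fintype A]

lemma Vstar_le_iSup_Qstar [Nonempty A] (M : MDP S A) {h : ℕ} (hh : h < M.H) (s : S) :
    Vstar M h s ≤ ⨆ a, Qstar M h s a := by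
  refine ciSup_le fun π => ?_
  rw [Vfun_bellman M π.1 hh s]
  have hbdd : BddAbove (Set.range fun a => Qstar M h s a) :=
    (Set.finite_range _).bddAbove
  calc ∑ a, π.1 h s a * Qfun M π.1 h s a
      ≤ ∑ a, π.1 h s a * Qstar M h s a := by
        refine Finset.sum_le_sum fun a _ => mul_le_mul_of_nonneg_left ?_ (π.2.1 _ _ _)
        unfold Qfun Qstar
        refine add_le_add_right (Finset.sum_le_sum fun s' _ =>
          mul_le_mul_of_nonneg_left ?_ (M.P_nonneg _ _ _ _)) _
        exact Vfun_le_Vstar M π.2 _ s'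
    _ ≤ ∑ a, π.1 h s a * (⨆ a, Qstar M h s a) :=
        Finset.sum_le_sum fun a _ => mul_le_mul_of_nonneg_left (le_ciSup hbdd a) (π.2.1 _ _ _)
    _ = ⨆ a, Qstar M h s a := by rw [← Finset.sum_mul, π.2.2, one_mul]

lemma Qstar_sub_Qfun [DecidableEq A] (M : MDP S A) (d : ℕ → S → A) (h : ℕ) (s : S) (a : A) :
    Qstar M h s a - Qfun M (detPolicy d) h s a
      = ∑ s', M.P h s a s' * (Vstar M (h+1) s' - Vfun M (detPolicy d) (h+1) s') := by
  unfold Qstar Qfun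
  rw [Finset.sum_congr rfl (fun s' _ => mul_sub (M.P h s a s') _ _), Finset.sum_sub_distrib]
  ring

end Aux3
/-- Stepwise performance-difference bound: if the deterministic policy `d` is
`ε h s`-suboptimal w.r.t. its own `Q`-function at every state and step, then for every
step `h` and every policy `π'`,
`∑_s w^{π'}_h(s)(V^*_h(s) - V^π̂_h(s)) ≤ ∑_{h'=h}^{H-1} sup_π ∑_s w^π_{h'}(s) ε_{h'}(s)`. -/
theorem local_to_global_subopt_stepwise [Nonempty A] [DecidableEq A] (M : MDP S A)
    (d : ℕ → S → A) (ε : ℕ → S → ℝ) (hε : ∀ h s, 0 ≤ ε h s)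
    (hgap : ∀ h s,
      (⨆ a, Qfun M (detPolicy d) h s a) - Qfun M (detPolicy d) h s (d h s) ≤ ε h s) :
    ∀ h, ∀ π' : Policy S A, IsPolicy π' →
      ∑ s, visit M π' h s * (Vstar M h s - Vfun M (detPolicy d) h s)
        ≤ ∑ h' ∈ Finset.Ico h M.H,
            ⨆ π : {π : Policy S A // IsPolicy π}, ∑ s, visit M π.1 h' s * ε h' s := by
  classical
  have hd : IsPolicy (detPolicy (S := S) d) := isPolicy_detPolicy d
  have base : ∀ h, M.H ≤ h → ∀ π' : Policy S A, IsPolicy π' →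
      ∑ s, visit M π' h s * (Vstar M h s - Vfun M (detPolicy d) h s)
        ≤ ∑ h' ∈ Finset.Ico h M.H,
            ⨆ π : {π : Policy S A // IsPolicy π}, ∑ s, visit M π.1 h' s * ε h' s := by
    intro h hh π' hπ'
    have h1 : ∑ s, visit M π' h s * (Vstar M h s - Vfun M (detPolicy d) h s) = 0 :=
      Finset.sum_eq_zero fun s _ => by
        rw [Vstar_zero M hh s, Vfun_zero M _ hh s, sub_zero, mul_zero]
    rw [h1, Finset.Ico_eq_empty (by omega), Finset.sum_empty]
  suffices key : ∀ k h, M.H ≤ h + k → ∀ π' : Policy S A, IsPolicy π' →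
      ∑ s, visit M π' h s * (Vstar M h s - Vfun M (detPolicy d) h s)
        ≤ ∑ h' ∈ Finset.Ico h M.H,
            ⨆ π : {π : Policy S A // IsPolicy π}, ∑ s, visit M π.1 h' s * ε h' s by
    intro h π' hπ'
    exact key M.H h (by omega) π' hπ'
  intro k
  induction k with
  | zero => intro h hh π' hπ'; exact base h (by omega) π' hπ'
  | succ k ih =>
    intro h hh π' hπ'
    rcases le_or_gt M.H h with hhH | hhH
    · exact base h hhH π' hπ'
    -- main step : h < M.H
    set g : S → A → ℝ := fun s a =>
      ∑ s', M.P h s a s' * (Vstar M (h+1) s' - Vfun M (detPolicy d) (h+1) s') with hg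
    have hex : ∀ s : S, ∃ a : A, ∀ b, g s b ≤ g s a := fun s => Finite.exists_max (g s)
    choose astar hastar using hex
    -- pointwise bound
    have hpt : ∀ s, Vstar M h s - Vfun M (detPolicy d) h s ≤ ε h s + g s (astar s) := by
      intro s
      have h1 : Vstar M h s ≤ ⨆ a, Qstar M h s a := Vstar_le_iSup_Qstar M hhH s
      have h2 : (⨆ a, Qstar M h s a) ≤ (⨆ a, Qfun M (detPolicy d) h s a) + g s (astar s) := by
        refine ciSup_le fun a => ?_
        have e1 := Qstar_sub_Qfun M d h s a
        have e2 : Qfun M (detPolicy d) h s a ≤ ⨆ a, Qfun M (detPolicy d) h s a :=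
          le_ciSup (Set.finite_range _).bddAbove a
        have e3 := hastar s a
        rw [hg] at e3
        linarith
      have h3 : Vfun M (detPolicy d) h s = Qfun M (detPolicy d) h s (d h s) := Vfun_det M d hhH s
      have h4 := hgap h s
      linarith
    -- the shifted policy
    set π'' : Policy S A := fun h' s a =>
      if h' = h then (if a = astar s then (1:ℝ) else 0) else π' h' s a with hπ''def
    have hπ'' : IsPolicy π'' := by
      constructor
      · intro h' s a
        rw [hπ''def]
        dsimp only
        split
        · split <;> norm_num
        · exact hπ'.1 _ _ _
      · intro h' s
        rw [hπ''def]
        dsimp only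
        split
        · simp
        · exact hπ'.2 _ _
    have hvis : ∀ s, visit M π'' h s = visit M π' h s := by
      refine visit_congr M h (fun kk hkk s a => ?_)
      rw [hπ''def]
      dsimp only
      rw [if_neg (by omega)]
    have hvis1 : ∀ s', visit M π'' (h+1) s'
        = ∑ s, visit M π' h s * M.P h s (astar s) s' := by
      intro s'
      rw [visit]
      refine Finset.sum_congr rfl fun s _ => ?_
      rw [Finset.sum_congr rfl (fun a _ => by
        rw [hvis s, hπ''def] : ∀ a ∈ Finset.univ, visit M π'' h s * π'' h s a * M.P h s a s'
          = visit M π' h s * ((fun h' s a => if h' = h then (if a = astar s then (1:ℝ) else 0)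
              else π' h' s a) h s a) * M.P h s a s')]
      simp [mul_ite, ite_mul, Finset.sum_ite_eq']
    -- bound on the epsilon term at step h
    have hA : ∑ s, visit M π' h s * ε h s
        ≤ ⨆ π : {π : Policy S A // IsPolicy π}, ∑ s, visit M π.1 h s * ε h s :=
      le_ciSup (bddAbove_visit_eps M ε hε h) (⟨π', hπ'⟩ : {π : Policy S A // IsPolicy π})
    -- bound on the future term via the induction hypothesis
    have hrw : ∑ s', visit M π'' (h+1) s' * (Vstar M (h+1) s' - Vfun M (detPolicy d) (h+1) s')
        = ∑ s, visit M π' h s * g s (astar s) := by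
      calc ∑ s', visit M π'' (h+1) s' * (Vstar M (h+1) s' - Vfun M (detPolicy d) (h+1) s')
          = ∑ s', ∑ s, visit M π' h s *
              (M.P h s (astar s) s' * (Vstar M (h+1) s' - Vfun M (detPolicy d) (h+1) s')) := by
            refine Finset.sum_congr rfl fun s' _ => ?_
            rw [hvis1 s', Finset.sum_mul]
            exact Finset.sum_congr rfl fun s _ => by ring
        _ = ∑ s, ∑ s', visit M π' h s *
              (M.P h s (astar s) s' * (Vstar M (h+1) s' - Vfun M (detPolicy d) (h+1) s')) :=
            Finset.sum_comm
        _ = ∑ s, visit M π' h s * g s (astar s) := by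
            refine Finset.sum_congr rfl fun s _ => ?_
            rw [hg, ← Finset.mul_sum]
    have hB : ∑ s, visit M π' h s * g s (astar s)
        ≤ ∑ h' ∈ Finset.Ico (h+1) M.H,
            ⨆ π : {π : Policy S A // IsPolicy π}, ∑ s, visit M π.1 h' s * ε h' s := by
      rw [← hrw]
      exact ih (h+1) (by omega) π'' hπ''
    calc ∑ s, visit M π' h s * (Vstar M h s - Vfun M (detPolicy d) h s)
        ≤ ∑ s, visit M π' h s * (ε h s + g s (astar s)) :=
          Finset.sum_le_sum fun s _ =>
            mul_le_mul_of_nonneg_left (hpt s) (visit_nonneg M hπ' h s)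
      _ = (∑ s, visit M π' h s * ε h s) + ∑ s, visit M π' h s * g s (astar s) := by
          rw [← Finset.sum_add_distrib]
          exact Finset.sum_congr rfl fun s _ => by ring
      _ ≤ (⨆ π : {π : Policy S A // IsPolicy π}, ∑ s, visit M π.1 h s * ε h s)
            + ∑ h' ∈ Finset.Ico (h+1) M.H,
                ⨆ π : {π : Policy S A // IsPolicy π}, ∑ s, visit M π.1 h' s * ε h' s :=
          add_le_add hA hB
      _ = ∑ h' ∈ Finset.Ico h M.H,
            ⨆ π : {π : Policy S A // IsPolicy π}, ∑ s, visit M π.1 h' s * ε h' s :=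
          (Finset.sum_eq_sum_Ico_succ_bot hhH (fun h' => ⨆ π : {π : Policy S A // IsPolicy π}, ∑ s, visit M π.1 h' s * ε h' s)).symm
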